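/- arXiv:2211.11961 — 2 statements merged into one kernel-verified Lean document; each statement's English description precedes it below -/
import Mathlib

section
/- Consider a sequence of independent trials where in trial i a facility is opened with probability p_i = min(1, d_i·w_i/f) and if not opened a cost p_i·f = d_i·w_i is incurred (when p_i < 1), stopping when the first facility is opened. Define C_m = p_m·f·(1−p_m) and recursively C_i = (1−p_i)·(p_i·f + C_{i+1}). Then C_1 ≤ f. -/
/-! The bound `C i ≤ f` propagates backwards from `i = m`: at the last trial
`p f (1 - p) ≤ f` since `p (1 - p) ≤ 1/4`, and if `C (i+1) ≤ f` then
`C i ≤ (1 - p) (p f + f) = f (1 - p²) ≤ f`. -/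

lemma mul_mul_one_sub_le {f : ℝ} (hf : 0 ≤ f) (p : ℝ) : p * f * (1 - p) ≤ f := by
  nlinarith [mul_nonneg hf (sq_nonneg (p - 1 / 2))]

lemma one_sub_mul_add_le {f p c : ℝ} (hf : 0 ≤ f) (hp : p ≤ 1) (hc : c ≤ f) :
    (1 - p) * (p * f + c) ≤ f :=
  calc (1 - p) * (p * f + c) ≤ (1 - p) * (p * f + f) := by gcongr
    _ = f - p ^ 2 * f := by ring
    _ ≤ f := sub_le_self f (by positivity)

theorem expected_cost_before_first_facility_general (f : ℝ) (hf : 0 < f)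
    (m : ℕ) (hm : 1 ≤ m) (p C : ℕ → ℝ)
    (hp1 : ∀ i, p i ≤ 1)
    (hCm : C m = p m * f * (1 - p m))
    (hC : ∀ i, 1 ≤ i → i < m → C i = (1 - p i) * (p i * f + C (i + 1))) :
    C 1 ≤ f := by
  refine Nat.decreasingInduction' (P := fun i ↦ C i ≤ f) (fun i him hi hnext ↦ ?_) hm ?_
  · rw [hC i hi him]
    exact one_sub_mul_add_le hf.le (hp1 i) hnext
  · rw [hCm]
    exact mul_mul_one_sub_le hf.le (p m)

/-- Backward recursion bounding the expected cost paid before the first facility opens: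
if `C m = p m · f · (1 − p m)` and `C i = (1 − p i)(p i · f + C (i+1))` for `1 ≤ i < m`,
with all `p i ∈ [0,1]` and `f > 0`, then `C 1 ≤ f`. -/
theorem expected_cost_before_first_facility (f : ℝ) (hf : 0 < f)
    (m : ℕ) (hm : 1 ≤ m) (p C : ℕ → ℝ)
    (hp0 : ∀ i, 0 ≤ p i) (hp1 : ∀ i, p i ≤ 1)
    (hCm : C m = p m * f * (1 - p m))
    (hC : ∀ i, 1 ≤ i → i < m → C i = (1 - p i) * (p i * f + C (i + 1))) :
    C 1 ≤ f :=
  expected_cost_before_first_facility_general f hf m hm p C hp1 hCm hC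
end

section
/- In the Selection Process on [n] with a uniformly random arrival order and adversarial non-increasing probability vectors (p_{i,j} ≥ p_{i+1,j} for all i, j), the expected number of selected elements is O(log n); specifically, it is at most c·log n for an absolute constant c (e.g., selections can be coupled so that each selection discards at least a 1/3-fraction of remaining candidate elements in expectation). -/
/-- In the Selection Process, given the arrival order `π` (the element arriving at time
`i` is `π i`) and coin outcomes `b` (the coin at time `i` comes up with probability
`p i (π i)`), the element arriving at time `i` is selected iff its coin came up and it
exceeds all previously selected elements. -/
def isSelected (n : ℕ) (π : Equiv.Perm (Fin n)) (b : Fin n → Bool) (i : Fin n) : Prop :=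
  b i = true ∧ ∀ j : Fin n, (h : j < i) → isSelected n π b j → π j < π i
termination_by i.1
decreasing_by exact h

/-!
Position `i` is selected iff its coin comes up and no position `j ≤ i` carrying a larger
element has its coin up; given the order this has probability
`p i (π i) * ∏ (1 - p j (π j))`, and monotonicity lets us replace every `p j` by `p i`.
For a single bias `q = p i`, the first `i + 1` positions are exchangeable under a uniformly
random order, and their `i + 1` such terms add up to the probability that some coin among them
comes up, which is at most `1`. Hence position `i` is selected with probability at most
`1 / (i + 1)`, and the expected number of selections is at most `H_n ≤ 1 + log n ≤ 3 log n`.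
-/

open Finset

section Bernoulli

variable {ι R : Type*} [Fintype ι] [DecidableEq ι] [CommRing R]

theorem sum_prod_bernoulli_mul_indicator (q : ι → R) {i : ι} {S : Finset ι} (hi : i ∉ S) :
    ∑ b : ι → Bool, (∏ j, if b j then q j else 1 - q j) *
        (if b i = true ∧ ∀ j ∈ S, b j = false then 1 else 0) =
      q i * ∏ j ∈ S, (1 - q j) := by
  set T : ∀ j : ι, Finset Bool := fun j =>
    if j = i then {true} else if j ∈ S then {false} else univ
  have hmem (b : ι → Bool) : b ∈ Fintype.piFinset T ↔ b i = true ∧ ∀ j ∈ S, b j = false := by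
    simp only [Fintype.mem_piFinset, T]
    constructor
    · intro h
      refine ⟨by simpa using h i, fun j hj => ?_⟩
      have := h j
      rwa [if_neg (ne_of_mem_of_not_mem hj hi), if_pos hj, mem_singleton] at this
    · rintro ⟨hbi, hS⟩ j
      split_ifs with hji hjS
      · simp [hji, hbi]
      · simp [hS j hjS]
      · exact mem_univ _
  have hfilter : Fintype.piFinset T =
      univ.filter fun b : ι → Bool => b i = true ∧ ∀ j ∈ S, b j = false := by
    ext b; rw [hmem, mem_filter, and_iff_right (mem_univ b)]
  calc _ = ∑ b ∈ Fintype.piFinset T, ∏ j, if b j then q j else 1 - q j := by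
        rw [hfilter, sum_filter]
        simp only [mul_ite, mul_one, mul_zero]
    _ = ∏ j, ∑ x ∈ T j, if x then q j else 1 - q j :=
        (prod_univ_sum T fun j (x : Bool) => if x then q j else 1 - q j).symm
    _ = ∏ j, (if j = i then q j else 1) * (if j ∈ S then 1 - q j else 1) := by
        refine prod_congr rfl fun j _ => ?_
        by_cases hji : j = i
        · subst hji; simp [T, hi]
        · by_cases hjS : j ∈ S <;> simp [T, hji, hjS]
    _ = q i * ∏ j ∈ S, (1 - q j) := by
        rw [prod_mul_distrib, prod_ite_eq', prod_ite_mem, univ_inter, if_pos (mem_univ i)]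

end Bernoulli

section RandomOrder

theorem sum_mul_prod_one_sub_of_lt {α R : Type*} [LinearOrder α] [CommRing R] (q : α → R)
    (s : Finset α) :
    ∑ u ∈ s, q u * ∏ v ∈ s with u < v, (1 - q v) = 1 - ∏ v ∈ s, (1 - q v) := by
  rw [eq_sub_iff_add_eq, add_comm, ← eq_sub_iff_add_eq]
  exact prod_one_sub_ordered (ι := αᵒᵈ) s q

variable {α : Type*} [Fintype α] [LinearOrder α]

theorem sum_perm_mul_prod_eq_of_mem {R : Type*} [CommRing R] (q : α → R) {A : Finset α}
    {i k : α} (hi : i ∈ A) (hk : k ∈ A) :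
    ∑ π : Equiv.Perm α, q (π k) * ∏ j ∈ A with π k < π j, (1 - q (π j)) =
      ∑ π : Equiv.Perm α, q (π i) * ∏ j ∈ A with π i < π j, (1 - q (π j)) := by
  set σ := Equiv.swap k i
  have hσ : {a | σ a ≠ a} ⊆ A := fun a ha => by
    by_contra haA
    exact ha (Equiv.swap_apply_of_ne_of_ne (ne_of_mem_of_not_mem hk haA).symm
      (ne_of_mem_of_not_mem hi haA).symm)
  refine Fintype.sum_equiv (Equiv.mulRight σ) _ _ fun π => ?_
  simp only [Equiv.coe_mulRight, Equiv.Perm.mul_apply, σ, Equiv.swap_apply_right, prod_filter]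
  rw [← Equiv.Perm.prod_comp σ A _ hσ]

theorem card_mul_sum_perm_mul_prod_le (q : α → ℝ) (hq : ∀ v, q v ≤ 1) {A : Finset α} {i : α}
    (hi : i ∈ A) :
    #A * ∑ π : Equiv.Perm α, q (π i) * ∏ j ∈ A with π i < π j, (1 - q (π j)) ≤
      (Fintype.card α).factorial := by
  have hperm (π : Equiv.Perm α) :
      ∑ k ∈ A, q (π k) * ∏ j ∈ A with π k < π j, (1 - q (π j)) = 1 - ∏ j ∈ A, (1 - q (π j)) := by
    simpa [sum_map, filter_map, prod_map] using sum_mul_prod_one_sub_of_lt q (A.map π.toEmbedding)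
  calc #A * ∑ π : Equiv.Perm α, q (π i) * ∏ j ∈ A with π i < π j, (1 - q (π j))
      = ∑ k ∈ A, ∑ π : Equiv.Perm α, q (π k) * ∏ j ∈ A with π k < π j, (1 - q (π j)) := by
        rw [sum_congr rfl fun k hk => sum_perm_mul_prod_eq_of_mem q hi hk, sum_const, nsmul_eq_mul]
    _ = ∑ π : Equiv.Perm α, (1 - ∏ j ∈ A, (1 - q (π j))) := by
        rw [sum_comm]
        exact sum_congr rfl fun π _ => hperm π
    _ ≤ ∑ _π : Equiv.Perm α, (1 : ℝ) :=
        sum_le_sum fun π _ => sub_le_self _ (prod_nonneg fun j _ => sub_nonneg.2 (hq _))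
    _ = (Fintype.card α).factorial := by simp [Fintype.card_perm]

end RandomOrder

section SelectionProcess

variable {n : ℕ}

def earlierLarger (π : Equiv.Perm (Fin n)) (i : Fin n) : Finset (Fin n) :=
  {j ∈ Iic i | π i < π j}

theorem not_mem_earlierLarger_self (π : Equiv.Perm (Fin n)) (i : Fin n) :
    i ∉ earlierLarger π i := by
  simp [earlierLarger]

def selectionProb (p : Fin n → Fin n → ℝ) (π : Equiv.Perm (Fin n)) (i : Fin n) : ℝ :=
  p i (π i) * ∏ j ∈ earlierLarger π i, (1 - p j (π j))

theorem exists_isSelected_le_of_coin (π : Equiv.Perm (Fin n)) {b : Fin n → Bool} {j : Fin n}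
    (hbj : b j = true) : ∃ k ≤ j, isSelected n π b k ∧ π j ≤ π k := by
  by_cases hj : isSelected n π b j
  · exact ⟨j, le_rfl, hj, le_rfl⟩
  · rw [isSelected] at hj
    push Not at hj
    obtain ⟨k, hkj, hk, hjk⟩ := hj hbj
    exact ⟨k, hkj.le, hk, hjk⟩

/- Being larger than every earlier selected element is the same as being larger than every
earlier element whose coin came up, since each of the latter is dominated by a selected one. -/
theorem isSelected_iff (π : Equiv.Perm (Fin n)) (b : Fin n → Bool) (i : Fin n) :
    isSelected n π b i ↔ b i = true ∧ ∀ j ∈ earlierLarger π i, b j = false := by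
  simp only [earlierLarger, mem_filter, mem_Iic, and_imp]
  rw [isSelected]
  refine and_congr_right fun _ => ⟨fun h j hji hij => ?_, fun h j hji hj => ?_⟩
  · rw [Bool.eq_false_iff]
    intro hbj
    obtain ⟨k, hkj, hk, hjk⟩ := exists_isSelected_le_of_coin π hbj
    have hki : k < i := lt_of_le_of_lt hkj (lt_of_le_of_ne hji (by rintro rfl; exact hij.false))
    exact (hij.trans_le hjk).not_gt (h k hki hk)
  · rw [isSelected] at hj
    refine lt_of_le_of_ne (not_lt.1 fun hij => ?_) (π.injective.ne (ne_of_lt hji))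
    simpa [hj.1] using h j hji.le hij

theorem sum_coins_mul_card_isSelected (p : Fin n → Fin n → ℝ) (π : Equiv.Perm (Fin n)) :
    ∑ b : Fin n → Bool, (∏ i, if b i then p i (π i) else 1 - p i (π i)) *
        (Nat.card {i : Fin n // isSelected n π b i} : ℝ) =
      ∑ i, selectionProb p π i := by
  have hcard (b : Fin n → Bool) : (Nat.card {i : Fin n // isSelected n π b i} : ℝ) =
      ∑ i, if b i = true ∧ ∀ j ∈ earlierLarger π i, b j = false then 1 else 0 := by
    rw [Nat.card_congr (Equiv.subtypeEquivRight (isSelected_iff π b)), Nat.card_eq_fintype_card,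
      Fintype.card_subtype, card_filter, Nat.cast_sum]
    push_cast
    rfl
  simp_rw [hcard, mul_sum]
  rw [sum_comm]
  refine sum_congr rfl fun i _ => ?_
  rw [selectionProb]
  convert sum_prod_bernoulli_mul_indicator (fun j => p j (π j)) (not_mem_earlierLarger_self π i)

theorem sum_perm_selectionProb_le (p : Fin n → Fin n → ℝ) (hp0 : ∀ i j, 0 ≤ p i j)
    (hp1 : ∀ i j, p i j ≤ 1) (hmono : ∀ i i' j, i ≤ i' → p i' j ≤ p i j) (i : Fin n) :
    ∑ π : Equiv.Perm (Fin n), selectionProb p π i ≤ n.factorial / (i + 1 : ℝ) := by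
  have hcard := card_mul_sum_perm_mul_prod_le (p i) (hp1 i) (mem_Iic.2 (le_refl i))
  rw [Fin.card_Iic, Fintype.card_fin] at hcard
  rw [le_div_iff₀ (by positivity)]
  calc _ ≤ (∑ π : Equiv.Perm (Fin n), p i (π i) * ∏ j ∈ earlierLarger π i, (1 - p i (π j))) *
        (i + 1 : ℝ) := by
        refine mul_le_mul_of_nonneg_right (sum_le_sum fun π _ => ?_) (by positivity)
        refine mul_le_mul_of_nonneg_left ?_ (hp0 _ _)
        refine prod_le_prod (fun j _ => sub_nonneg.2 (hp1 _ _)) fun j hj => ?_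
        exact sub_le_sub_left (hmono j i _ (mem_Iic.1 (mem_filter.1 hj).1)) 1
    _ ≤ n.factorial := by
        rw [mul_comm]
        exact_mod_cast hcard

end SelectionProcess

/-- In the Selection Process on `[n]` with a uniformly random arrival order and
adversarial probability vectors that are non-increasing in time
(`p i j ≥ p i' j` for `i ≤ i'`), the expected number of selected elements is
`O(log n)`: it is at most `c · log n` for an absolute constant `c`. -/
theorem selection_process_log_bound :
    ∃ c : ℝ, 0 < c ∧ ∀ (n : ℕ), 2 ≤ n → ∀ p : Fin n → Fin n → ℝ,
      (∀ i j, 0 ≤ p i j) → (∀ i j, p i j ≤ 1) →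
      (∀ i i' j, i ≤ i' → p i' j ≤ p i j) →
      (∑ π : Equiv.Perm (Fin n), ∑ b : Fin n → Bool,
          (∏ i, if b i then p i (π i) else 1 - p i (π i)) *
            (Nat.card {i : Fin n // isSelected n π b i} : ℝ)) / (Nat.factorial n : ℝ)
        ≤ c * Real.log n := by
  refine ⟨3, by norm_num, fun n hn p hp0 hp1 hmono => ?_⟩
  have hlog : 1 + Real.log n ≤ 3 * Real.log n := by
    have : Real.log 2 ≤ Real.log n := Real.log_le_log two_pos (by exact_mod_cast hn)
    linarith [Real.log_two_gt_d9]
  rw [div_le_iff₀ (by positivity)]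
  calc _ = ∑ i : Fin n, ∑ π : Equiv.Perm (Fin n), selectionProb p π i := by
        simp_rw [sum_coins_mul_card_isSelected]
        exact sum_comm
    _ ≤ ∑ i : Fin n, n.factorial / (i + 1 : ℝ) :=
        sum_le_sum fun i _ => sum_perm_selectionProb_le p hp0 hp1 hmono i
    _ = n.factorial * harmonic n := by
        rw [harmonic, Rat.cast_sum, mul_sum,
          Fin.sum_univ_eq_sum_range (fun i => n.factorial / (i + 1 : ℝ))]
        push_cast
        rfl
    _ ≤ n.factorial * (1 + Real.log n) := by gcongr; exact harmonic_le_one_add_log n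
    _ ≤ 3 * Real.log n * n.factorial := by nlinarith [n.factorial_pos]
end
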